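/- The series ∑_{n=0}^∞ ζ(2n)/((2n+1)·4^n) equals -(1/2)·log 2, where ζ(0) = -1/2. -/

import Mathlib

open Real Filter Topology

noncomputable def myF (n m : ℕ) : ℝ :=
  (1 / (2 * ((m : ℝ) + 1))) ^ (2 * (n + 1)) / (2 * ((n : ℝ) + 1) + 1)

noncomputable def phi (k : ℕ) : ℝ :=
  ((k : ℝ) + 1) * (log (2 * (k : ℝ) + 3) - log (2 * (k : ℝ) + 1)) - 1

noncomputable def zfun : ℕ → ℝ := fun n =>
  if n = 0 then -(1/2)
  else ∑' m : ℕ, (1 / (2 * ((m : ℝ) + 1))) ^ (2 * n) / (2 * (n : ℝ) + 1)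

lemma myF_nonneg (n m : ℕ) : 0 ≤ myF n m := by unfold myF; positivity

lemma innerHasSum (m : ℕ) :
    HasSum (fun n => myF n m)
      (((m : ℝ) + 1) * (log (2 * (m : ℝ) + 3) - log (2 * (m : ℝ) + 1)) - 1) := by
  set M : ℝ := (m : ℝ) + 1 with hM
  have hM1 : (1 : ℝ) ≤ M := by simp [hM]
  set x : ℝ := 1 / (2 * M) with hx
  have hx0 : 0 < x := by positivity
  have hxlt : |x| < 1 := by
    rw [abs_of_pos hx0, hx]
    rw [div_lt_one (by linarith)]
    linarith
  have h := hasSum_log_sub_log_of_abs_lt_one hxlt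
  have h2 := h.mul_left (1 / (2 * x))
  have hfun : (fun k : ℕ => 1 / (2 * x) * ((2 : ℝ) * (1 / (2 * k + 1)) * x ^ (2 * k + 1)))
      = fun k : ℕ => x ^ (2 * k) / (2 * (k : ℝ) + 1) := by
    funext k
    rw [pow_succ]
    field_simp
  rw [hfun] at h2
  have h3 := (hasSum_nat_add_iff' (f := fun k : ℕ => x ^ (2 * k) / (2 * (k : ℝ) + 1)) 1).mpr h2
  have hxx : 1 / (2 * x) = M := by rw [hx]; field_simp
  have h1x : 1 + x = (2 * M + 1) / (2 * M) := by rw [hx]; field_simp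
  have h2x : 1 - x = (2 * M - 1) / (2 * M) := by rw [hx]; field_simp
  have ha : (2 * M + 1) ≠ 0 := by positivity
  have hb : (2 * M - 1) ≠ 0 := by intro h; nlinarith
  have hc : (2 * M) ≠ 0 := by positivity
  have hlog : log (1 + x) - log (1 - x) = log (2 * (m : ℝ) + 3) - log (2 * (m : ℝ) + 1) := by
    rw [h1x, h2x, log_div ha hc, log_div hb hc]
    have e1 : 2 * M + 1 = 2 * (m : ℝ) + 3 := by rw [hM]; ring
    have e2 : 2 * M - 1 = 2 * (m : ℝ) + 1 := by rw [hM]; ring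
    rw [e1, e2]; ring
  have hval : 1 / (2 * x) * (log (1 + x) - log (1 - x)) - ∑ i ∈ Finset.range 1,
        x ^ (2 * i) / (2 * (i : ℝ) + 1)
      = M * (log (2 * (m : ℝ) + 3) - log (2 * (m : ℝ) + 1)) - 1 := by
    rw [hxx, hlog]
    norm_num
  rw [hval] at h3
  convert h3 using 2 with n
  · rfl
  unfold myF
  rw [hx, hM]
  push_cast
  ring_nf

lemma sq_summable : Summable (fun m : ℕ => (1 / ((m : ℝ) + 1)) ^ 2) := by
  have h := Real.summable_one_div_nat_pow.mpr (le_refl 2)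
  have := (summable_nat_add_iff (f := fun n : ℕ => 1 / (n : ℝ) ^ 2) 1).mpr h
  refine this.congr fun m => ?_
  push_cast
  rw [div_pow, one_pow]

lemma row_summable (n : ℕ) : Summable (fun m => myF n m) := by
  refine Summable.of_nonneg_of_le (fun m => myF_nonneg n m) (fun m => ?_) sq_summable
  unfold myF
  have h1 : (1 / (2 * ((m : ℝ) + 1))) ^ (2 * (n + 1)) ≤ (1 / ((m : ℝ) + 1)) ^ 2 := by
    calc (1 / (2 * ((m : ℝ) + 1))) ^ (2 * (n + 1)) ≤ (1 / (2 * ((m : ℝ) + 1))) ^ 2 := by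
          apply pow_le_pow_of_le_one (by positivity) ?_ (by omega)
          rw [div_le_one (by positivity)]; linarith [Nat.cast_nonneg (α := ℝ) m]
      _ ≤ (1 / ((m : ℝ) + 1)) ^ 2 := by
          apply pow_le_pow_left₀ (by positivity)
          apply div_le_div_of_nonneg_left one_pos.le (by positivity) (by linarith [Nat.cast_nonneg (α := ℝ) m])
  calc (1 / (2 * ((m : ℝ) + 1))) ^ (2 * (n + 1)) / (2 * ((n : ℝ) + 1) + 1)
      ≤ (1 / (2 * ((m : ℝ) + 1))) ^ (2 * (n + 1)) / 1 := by
        apply div_le_div_of_nonneg_left (by positivity) one_pos ?_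
        push_cast; linarith [Nat.cast_nonneg (α := ℝ) n]
    _ = (1 / (2 * ((m : ℝ) + 1))) ^ (2 * (n + 1)) := div_one _
    _ ≤ (1 / ((m : ℝ) + 1)) ^ 2 := h1

lemma myF_summable : Summable (fun p : ℕ × ℕ => myF p.1 p.2) := by
  rw [summable_prod_of_nonneg (fun p => myF_nonneg p.1 p.2)]
  refine ⟨fun n => row_summable n, ?_⟩
  set C : ℝ := ∑' m : ℕ, (1 / ((m : ℝ) + 1)) ^ 2 with hC
  refine Summable.of_nonneg_of_le (fun n => tsum_nonneg fun m => myF_nonneg n m)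
    (fun n => ?_) ((summable_geometric_of_lt_one (by norm_num) (by norm_num : (1/4:ℝ) < 1)).mul_left C)
  have hle : ∀ m : ℕ, myF n m ≤ (1 / ((m : ℝ) + 1)) ^ 2 * (1 / 4) ^ n := by
    intro m
    unfold myF
    have hbase : (0:ℝ) < 2 * ((m : ℝ) + 1) := by positivity
    have key : (1 / (2 * ((m : ℝ) + 1))) ^ (2 * (n + 1))
        ≤ (1 / ((m : ℝ) + 1)) ^ 2 * (1 / 4) ^ n := by
      have : (1 / (2 * ((m : ℝ) + 1))) ^ (2 * (n + 1))
          = ((1 / (2 * ((m : ℝ) + 1))) ^ 2) ^ (n + 1) := by rw [← pow_mul]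
      rw [this, pow_succ]
      have h2 : (1 / (2 * ((m : ℝ) + 1))) ^ 2 ≤ (1 / ((m : ℝ) + 1)) ^ 2 := by
        apply pow_le_pow_left₀ (by positivity)
        apply div_le_div_of_nonneg_left one_pos.le (by positivity)
          (by linarith [Nat.cast_nonneg (α := ℝ) m])
      have h3 : ((1 / (2 * ((m : ℝ) + 1))) ^ 2) ^ n ≤ (1 / 4) ^ n := by
        apply pow_le_pow_left₀ (by positivity)
        rw [div_pow, one_pow]
        apply div_le_div_of_nonneg_left one_pos.le (by norm_num)
        nlinarith [Nat.cast_nonneg (α := ℝ) m]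
      calc ((1 / (2 * ((m : ℝ) + 1))) ^ 2) ^ n * (1 / (2 * ((m : ℝ) + 1))) ^ 2
          ≤ (1 / 4) ^ n * (1 / ((m : ℝ) + 1)) ^ 2 := by
            apply mul_le_mul h3 h2 (by positivity) (by positivity)
        _ = (1 / ((m : ℝ) + 1)) ^ 2 * (1 / 4) ^ n := by ring
    calc (1 / (2 * ((m : ℝ) + 1))) ^ (2 * (n + 1)) / (2 * ((n : ℝ) + 1) + 1)
        ≤ (1 / (2 * ((m : ℝ) + 1))) ^ (2 * (n + 1)) / 1 :=
          div_le_div_of_nonneg_left (by positivity) one_pos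
            (by linarith [Nat.cast_nonneg (α := ℝ) n])
      _ = _ := div_one _
      _ ≤ _ := key
  calc ∑' m, myF n m ≤ ∑' m : ℕ, (1 / ((m : ℝ) + 1)) ^ 2 * (1 / 4) ^ n :=
        Summable.tsum_le_tsum hle (row_summable n) (sq_summable.mul_right _)
    _ = C * (1 / 4) ^ n := by rw [tsum_mul_right]

lemma partial_sum_eq (K : ℕ) :
    ∑ k ∈ Finset.range K, phi k
      = (K : ℝ) * log (2 * K + 1)
        - (log ((Nat.factorial (2 * K)) : ℝ) - (K : ℝ) * log 2 - log ((Nat.factorial K) : ℝ)) - K := by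
  induction K with
  | zero => simp
  | succ K ih =>
    rw [Finset.sum_range_succ, ih]
    have hfac1 : ((Nat.factorial (2 * (K + 1))) : ℝ) = (2 * (K : ℝ) + 2) * ((2 * (K : ℝ)) + 1) * ((Nat.factorial (2 * K)) : ℝ) := by
      have : 2 * (K + 1) = (2 * K + 1) + 1 := by ring
      rw [this, Nat.factorial_succ, Nat.factorial_succ]
      push_cast
      ring
    have hfac2 : ((Nat.factorial (K + 1)) : ℝ) = ((K : ℝ) + 1) * ((Nat.factorial K) : ℝ) := by
      rw [Nat.factorial_succ]; push_cast; ring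
    have hK0 : (0:ℝ) ≤ (K : ℝ) := Nat.cast_nonneg K
    have hf1 : (0:ℝ) < ((Nat.factorial (2 * K)) : ℝ) := by positivity
    have hf2 : (0:ℝ) < ((Nat.factorial K) : ℝ) := by positivity
    rw [hfac1, hfac2, Real.log_mul (by positivity) (by positivity),
      Real.log_mul (by positivity) (by positivity),
      Real.log_mul (by positivity) (by positivity)]
    have h22 : log (2 * (K : ℝ) + 2) = log 2 + log ((K : ℝ) + 1) := by
      rw [← Real.log_mul (by norm_num) (by positivity)]
      ring_nf
    rw [h22]
    unfold phi
    push_cast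
    ring

lemma psum_eq_E (K : ℕ) (hK1 : 1 ≤ K) :
    ∑ k ∈ Finset.range K, phi k
      = log ((1 + (1/2)/(K:ℝ)) ^ K)
        + (log (Stirling.stirlingSeq K) - log (Stirling.stirlingSeq (2*K)))
        - 1/2 * log 2 := by
  have hk : (1:ℝ) ≤ (K:ℝ) := by exact_mod_cast hK1
  have hkpos : (0:ℝ) < (K:ℝ) := by linarith
  rw [partial_sum_eq]
  have g1 : Real.log ((Nat.factorial K) : ℝ)
      = log (Stirling.stirlingSeq K) + 1/2 * Real.log (2*(K:ℝ))
        + (K:ℝ) * Real.log ((K:ℝ)/exp 1) := by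
    have := Stirling.log_stirlingSeq_formula K
    push_cast at this ⊢
    linarith
  have g2 : Real.log ((Nat.factorial (2*K)) : ℝ)
      = log (Stirling.stirlingSeq (2*K)) + 1/2 * Real.log (2*(2*(K:ℝ)))
        + (2*(K:ℝ)) * Real.log ((2*(K:ℝ))/exp 1) := by
    have := Stirling.log_stirlingSeq_formula (2*K)
    push_cast at this ⊢
    linarith
  rw [g1, g2]
  have hKne : (K:ℝ) ≠ 0 := hkpos.ne'
  have l1 : Real.log (2*(2*(K:ℝ))) = 2 * log 2 + log (K:ℝ) := by
    rw [show (2*(2*(K:ℝ))) = 2*2*(K:ℝ) by ring, log_mul (by norm_num) hKne,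
      log_mul (by norm_num) (by norm_num)]
    ring
  have l2 : Real.log (2*(K:ℝ)) = log 2 + log (K:ℝ) := log_mul (by norm_num) hKne
  have l3 : Real.log ((2*(K:ℝ))/exp 1) = log 2 + log (K:ℝ) - 1 := by
    rw [log_div (by positivity) (exp_ne_zero 1), l2, log_exp]
  have l4 : Real.log ((K:ℝ)/exp 1) = log (K:ℝ) - 1 := by
    rw [log_div hKne (exp_ne_zero 1), log_exp]
  have l5 : Real.log ((1 + (1/2)/(K:ℝ))^K)
      = (K:ℝ) * (log (2*(K:ℝ)+1) - log 2 - log (K:ℝ)) := by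
    rw [Real.log_pow]
    have hb : (1 + (1/2)/(K:ℝ)) = (2*(K:ℝ)+1)/(2*(K:ℝ)) := by field_simp
    rw [hb, log_div (by positivity) (by positivity), l2]
    ring
  rw [l1, l2, l3, l4, l5]
  ring

lemma tendsto_partial :
    Tendsto (fun K : ℕ => ∑ k ∈ Finset.range K, phi k) atTop
      (𝓝 (1/2 - 1/2 * log 2)) := by
  have h1 : Tendsto (fun K : ℕ => Real.log ((1 + (1/2)/(K:ℝ)) ^ K)) atTop (𝓝 (1/2)) := by
    have := (Real.continuousAt_log (x := Real.exp (1/2)) (by positivity)).tendsto.comp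
      (Real.tendsto_one_add_div_pow_exp (1/2))
    simpa [Function.comp_def, Real.log_exp] using this
  have hsqpos : (0:ℝ) < Real.sqrt π := Real.sqrt_pos.mpr Real.pi_pos
  have hlogs : Tendsto (fun n : ℕ => log (Stirling.stirlingSeq n)) atTop
      (𝓝 (log (Real.sqrt π))) :=
    (Real.continuousAt_log hsqpos.ne').tendsto.comp Stirling.tendsto_stirlingSeq_sqrt_pi
  have h2K : Tendsto (fun K : ℕ => 2 * K) atTop atTop :=
    tendsto_atTop_mono (fun n => by simp; omega) tendsto_id
  have h2 : Tendsto (fun K : ℕ => log (Stirling.stirlingSeq K)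
      - log (Stirling.stirlingSeq (2*K))) atTop (𝓝 0) := by
    simpa using hlogs.sub (hlogs.comp h2K)
  have h3 : Tendsto (fun K : ℕ => log ((1 + (1/2)/(K:ℝ)) ^ K)
      + (log (Stirling.stirlingSeq K) - log (Stirling.stirlingSeq (2*K))) - 1/2 * log 2)
      atTop (𝓝 (1/2 - 1/2 * log 2)) := by
    have := (h1.add h2).sub (tendsto_const_nhds (x := 1/2 * Real.log 2))
    simpa using this
  refine h3.congr' ?_
  filter_upwards [eventually_ge_atTop 1] with K hK
  exact (psum_eq_E K hK).symm

lemma col_summable (m : ℕ) : Summable (fun n => myF n m) := (innerHasSum m).summable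

lemma hasSum_phi : HasSum phi (1/2 - 1/2 * log 2) := by
  have hswap : Summable (fun p : ℕ × ℕ => myF p.2 p.1) := myF_summable.prod_symm
  have hcols : Summable (fun m => ∑' n, myF n m) :=
    ((summable_prod_of_nonneg (fun p => myF_nonneg p.2 p.1)).mp hswap).2
  have hphi : Summable phi := hcols.congr fun m => (innerHasSum m).tsum_eq
  have h1 : Tendsto (fun K : ℕ => ∑ k ∈ Finset.range K, phi k) atTop (𝓝 (∑' k, phi k)) :=
    hphi.hasSum.tendsto_sum_nat
  have h2 : (∑' k, phi k) = 1/2 - 1/2 * log 2 := tendsto_nhds_unique h1 tendsto_partial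
  exact h2 ▸ hphi.hasSum

lemma hasSum_rows : HasSum (fun n => ∑' m, myF n m) (1/2 - 1/2 * log 2) := by
  have hrows : Summable (fun n => ∑' m, myF n m) :=
    ((summable_prod_of_nonneg (fun p => myF_nonneg p.1 p.2)).mp myF_summable).2
  have hcomm : (∑' m, ∑' n, myF n m) = ∑' n, ∑' m, myF n m :=
    Summable.tsum_comm' myF_summable row_summable col_summable
  have h1 : (∑' m, ∑' n, myF n m) = 1/2 - 1/2 * log 2 := by
    have : (∑' m, ∑' n, myF n m) = ∑' m, phi m :=
      tsum_congr fun m => (innerHasSum m).tsum_eq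
    rw [this, hasSum_phi.tsum_eq]
  rw [hcomm] at h1
  exact h1 ▸ hrows.hasSum

lemma zfun_succ (n : ℕ) : zfun (n + 1) = ∑' m, myF n m := by
  simp only [zfun, Nat.succ_ne_zero, if_false]
  refine tsum_congr fun m => ?_
  unfold myF
  push_cast
  ring_nf

lemma hasSum_zfun : HasSum zfun (-(1/2) * log 2) := by
  have hshift : HasSum (fun n => zfun (n + 1)) (1/2 - 1/2 * log 2) := by
    have : (fun n => zfun (n + 1)) = fun n => ∑' m, myF n m := funext zfun_succ
    rw [this]; exact hasSum_rows
  apply (hasSum_nat_add_iff' (f := zfun) 1).mp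
  have hval : -(1/2) * log 2 - ∑ i ∈ Finset.range 1, zfun i = 1/2 - 1/2 * log 2 := by
    simp [zfun]; ring
  rw [hval]
  exact hshift

theorem stmt0 :
    ∑' n : ℕ, riemannZeta (2 * n) / ((2 * n + 1) * 4 ^ n) =
      ((-(1 / 2) * Real.log 2 : ℝ) : ℂ) := by
  have hC : HasSum (fun n : ℕ => ((zfun n : ℝ) : ℂ)) ((-(1/2) * Real.log 2 : ℝ) : ℂ) :=
    Complex.hasSum_ofReal.mpr hasSum_zfun
  have heq : ∀ n : ℕ, riemannZeta (2 * n) / ((2 * n + 1) * 4 ^ n) = ((zfun n : ℝ) : ℂ) := by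
    intro n
    match n with
    | 0 => norm_num [zfun, riemannZeta_zero]
    | (k + 1) =>
      set n := k + 1 with hn
      have hn1 : 1 ≤ n := Nat.le_add_left 1 k
      have hzeta : riemannZeta (2 * (n : ℂ)) = ∑' j : ℕ, ((1 / ((j : ℝ) + 1) ^ (2 * n) : ℝ) : ℂ) := by
        rw [show (2 * (n : ℂ)) = ((2 * n : ℕ) : ℂ) by push_cast; ring]
        rw [zeta_eq_tsum_one_div_nat_add_one_cpow
          (by rw [Complex.natCast_re]; exact_mod_cast (by omega : 1 < 2 * n))]
        refine tsum_congr fun j => ?_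
        rw [Complex.cpow_natCast]
        push_cast
        norm_num
      have hz : zfun n = (∑' j : ℕ, (1 / ((j : ℝ) + 1) ^ (2 * n) : ℝ))
          * (1 / ((2 * (n : ℝ) + 1) * 4 ^ n)) := by
        rw [← tsum_mul_right]
        simp only [zfun, hn]
        rw [if_neg (Nat.succ_ne_zero k)]
        refine tsum_congr fun m => ?_
        have h4 : ((2:ℝ)) ^ (2 * (k + 1)) = 4 ^ (k + 1) := by
          rw [pow_mul]; norm_num
        have hm : (0:ℝ) < (m : ℝ) + 1 := by positivity
        have hd : (0:ℝ) < 2 * ((k:ℝ) + 1) + 1 := by positivity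
        rw [div_pow, one_pow, mul_pow, h4]
        push_cast
        field_simp
      rw [hzeta, hz]
      push_cast [Complex.ofReal_tsum]
      rw [div_eq_mul_one_div]
  calc ∑' n : ℕ, riemannZeta (2 * n) / ((2 * n + 1) * 4 ^ n)
      = ∑' n : ℕ, ((zfun n : ℝ) : ℂ) := tsum_congr heq
    _ = _ := hC.tsum_eq
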